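/- Let Q : X → M_n(ℂ) be smooth with Q² = Q. Then for every p ≥ 1, the 2p-form Trace(Q(dQ)^{2p}) is closed. -/

import Mathlib

/-- A graded differential algebra (such as the differential forms on a
manifold): a ℂ-algebra with a grading `𝒜` and a differential `d` of degree one
squaring to zero and satisfying the graded Leibniz rule. -/
structure GradedDGA (A : Type*) [Ring A] [Algebra ℂ A]
    (𝒜 : ℕ → Submodule ℂ A) where
  d : A →ₗ[ℂ] A
  d_mem : ∀ (n : ℕ), ∀ a ∈ 𝒜 n, d a ∈ 𝒜 (n + 1)
  d_sq : ∀ a : A, d (d a) = 0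
  leibniz : ∀ (p : ℕ), ∀ a ∈ 𝒜 p, ∀ b : A,
    d (a * b) = d a * b + ((-1 : ℂ) ^ p) • (a * d b)

/-- Entrywise differential on matrices over a graded differential algebra. -/
def matD {A : Type*} [Ring A] [Algebra ℂ A] {𝒜 : ℕ → Submodule ℂ A}
    (D : GradedDGA A 𝒜) {n : ℕ} (M : Matrix (Fin n) (Fin n) A) :
    Matrix (Fin n) (Fin n) A :=
  Matrix.of fun a b => D.d (M a b)

/-!
Write `P = dQ`. Since `dP = 0` and `d(Q²) = dQ`, we get `d(Q P^{2p}) = P^{2p+1}` and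
`PQ + QP = P`. The latter gives `QPQ = 0` and `QP² = P²Q`, hence `Q P^{2p+1} Q = P^{2p} QPQ = 0`,
and the idempotent `1 - Q` satisfies the same relation. The entries of `Q` have degree 0, so they
commute with all entries in sight and `tr(P^{2p+1} Q) = tr(Q P^{2p+1} Q) = 0`; adding the same
identity for `1 - Q` gives `tr(P^{2p+1}) = 0`.
-/

section IdempotentRelation

variable {R : Type*} [Ring R] {e p : R}

theorem commute_mul_self_of_mul_add_mul_eq (h : p * e + e * p = p) : Commute e (p * p) := by
  have hep : e * p = p - p * e := eq_sub_of_add_eq' h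
  have hpe : p * e = p - e * p := eq_sub_of_add_eq h
  calc e * (p * p) = (p - p * e) * p := by rw [← mul_assoc, hep]
    _ = p * (p - e * p) := by noncomm_ring
    _ = p * p * e := by rw [← hpe, mul_assoc]

theorem IsIdempotentElem.mul_mul_eq_zero_of_mul_add_mul_eq (he : IsIdempotentElem e)
    (h : p * e + e * p = p) : e * p * e = 0 := by
  have h' : e * p * e + e * p = e * p :=
    calc e * p * e + e * p = e * (p * e + e * p) := by
          rw [mul_add, ← mul_assoc, ← mul_assoc, he.eq]
      _ = e * p := by rw [h]
  exact add_eq_right.mp h'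

theorem IsIdempotentElem.mul_pow_odd_mul_eq_zero (he : IsIdempotentElem e)
    (h : p * e + e * p = p) (k : ℕ) : e * p ^ (2 * k + 1) * e = 0 := by
  calc e * p ^ (2 * k + 1) * e
      = e * (p * p) ^ k * p * e := by rw [pow_succ, pow_mul, sq, ← mul_assoc e]
    _ = (p * p) ^ k * (e * p * e) := by
      rw [((commute_mul_self_of_mul_add_mul_eq h).pow_right k).eq]; noncomm_ring
    _ = 0 := by rw [he.mul_mul_eq_zero_of_mul_add_mul_eq h, mul_zero]

end IdempotentRelation

namespace Matrix

theorem trace_mul_comm_of_commute {m n R : Type*} [Fintype m] [Fintype n] [AddCommMonoid R]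
    [Mul R] {A : Matrix m n R} {B : Matrix n m R} (h : ∀ i j, Commute (A i j) (B j i)) :
    trace (A * B) = trace (B * A) := by
  simp only [trace, diag, mul_apply]
  rw [Finset.sum_comm]
  exact Finset.sum_congr rfl fun j _ => Finset.sum_congr rfl fun i _ => (h i j).eq

variable {n R : Type*} [Fintype n] [DecidableEq n] [Ring R]

theorem trace_pow_odd_mul_eq_zero (S : Subring R) {E P : Matrix n n R} (hE : IsIdempotentElem E)
    (hPE : P * E + E * P = P) (hES : E ∈ S.matrix) (hEC : E ∈ (Subring.centralizer S).matrix)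
    (hPS : P ∈ S.matrix) (k : ℕ) : trace (P ^ (2 * k + 1) * E) = 0 := by
  have hmem : P ^ (2 * k + 1) * E ∈ S.matrix := mul_mem (pow_mem hPS _) hES
  calc trace (P ^ (2 * k + 1) * E) = trace (P ^ (2 * k + 1) * E * E) := by rw [mul_assoc, hE.eq]
    _ = trace (E * (P ^ (2 * k + 1) * E)) :=
      trace_mul_comm_of_commute fun i j => Subring.mem_centralizer_iff.mp (hEC j i) _ (hmem i j)
    _ = 0 := by rw [← mul_assoc, hE.mul_pow_odd_mul_eq_zero hPE, trace_zero]

theorem trace_pow_odd_eq_zero {E P : Matrix n n R} (hE : IsIdempotentElem E)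
    (hPE : P * E + E * P = P) (hEE : ∀ i j k l, Commute (E i j) (E k l))
    (hEP : ∀ i j k l, Commute (E i j) (P k l)) (k : ℕ) : trace (P ^ (2 * k + 1)) = 0 := by
  let S := Subring.centralizer (Set.range fun x : n × n => E x.1 x.2)
  have hES : E ∈ S.matrix := fun i j => Subring.mem_centralizer_iff.mpr <| by
    rintro _ ⟨⟨a, b⟩, rfl⟩
    exact hEE a b i j
  have hPS : P ∈ S.matrix := fun i j => Subring.mem_centralizer_iff.mpr <| by
    rintro _ ⟨⟨a, b⟩, rfl⟩
    exact hEP a b i j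
  have hEC : E ∈ (Subring.centralizer S).matrix := fun i j =>
    Subring.mem_centralizer_iff.mpr fun g hg =>
      (Subring.mem_centralizer_iff.mp hg _ ⟨(i, j), rfl⟩).symm
  have hPE' : P * (1 - E) + (1 - E) * P = P := by
    calc P * (1 - E) + (1 - E) * P = P + P - (P * E + E * P) := by noncomm_ring
      _ = P := by rw [hPE, add_sub_cancel_right]
  calc trace (P ^ (2 * k + 1))
      = trace (P ^ (2 * k + 1) * E) + trace (P ^ (2 * k + 1) * (1 - E)) := by
        rw [← trace_add, ← mul_add, add_sub_cancel, mul_one]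
    _ = 0 := by
      rw [trace_pow_odd_mul_eq_zero S hE hPE hES hEC hPS,
        trace_pow_odd_mul_eq_zero S hE.one_sub hPE' (sub_mem (one_mem _) hES)
          (sub_mem (one_mem _) hEC) hPS, add_zero]

end Matrix

section MatD

variable {A : Type*} [Ring A] [Algebra ℂ A] {𝒜 : ℕ → Submodule ℂ A}
  (D : GradedDGA A 𝒜) {n : ℕ}

theorem trace_matD (M : Matrix (Fin n) (Fin n) A) : D.d M.trace = (matD D M).trace := by
  simp [Matrix.trace, Matrix.diag, matD, map_sum]

theorem matD_matD (M : Matrix (Fin n) (Fin n) A) : matD D (matD D M) = 0 := by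
  ext i j
  exact D.d_sq (M i j)

theorem matD_mem {p : ℕ} {M : Matrix (Fin n) (Fin n) A} (hM : ∀ i j, M i j ∈ 𝒜 p)
    (i j : Fin n) : matD D M i j ∈ 𝒜 (p + 1) :=
  D.d_mem p _ (hM i j)

theorem matD_mul {p : ℕ} {M : Matrix (Fin n) (Fin n) A} (hM : ∀ i j, M i j ∈ 𝒜 p)
    (N : Matrix (Fin n) (Fin n) A) :
    matD D (M * N) = matD D M * N + ((-1 : ℂ) ^ p) • (M * matD D N) := by
  ext i j
  simp only [matD, Matrix.of_apply, Matrix.add_apply, Matrix.smul_apply,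
    Matrix.mul_apply, map_sum, Finset.smul_sum, ← Finset.sum_add_distrib]
  exact Finset.sum_congr rfl fun k _ => D.leibniz p (M i k) (hM i k) (N k j)

theorem matD_pow_succ_eq_zero {p : ℕ} {M : Matrix (Fin n) (Fin n) A}
    (hM : ∀ i j, M i j ∈ 𝒜 p) (hdM : matD D M = 0) (k : ℕ) : matD D (M ^ (k + 1)) = 0 := by
  induction k with
  | zero => simpa using hdM
  | succ k ih => rw [pow_succ', matD_mul D hM, hdM, ih]; simp

end MatD

/-- For an idempotent matrix `Q` of functions (degree-0 elements of a
graded-commutative algebra of forms), the form `Trace (Q (dQ)^{2p})` is closed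
for every `p ≥ 1`. -/
theorem trace_QdQpow_closed {A : Type*} [Ring A] [Algebra ℂ A]
    {𝒜 : ℕ → Submodule ℂ A} (D : GradedDGA A 𝒜)
    (hcomm : ∀ (p q : ℕ), ∀ a ∈ 𝒜 p, ∀ b ∈ 𝒜 q,
      a * b = ((-1 : ℂ) ^ (p * q)) • (b * a))
    {n : ℕ} (Q : Matrix (Fin n) (Fin n) A) (hQ0 : ∀ a b, Q a b ∈ 𝒜 0)
    (hidem : Q * Q = Q) (p : ℕ) (hp : 1 ≤ p) :
    D.d (Matrix.trace (Q * (matD D Q) ^ (2 * p))) = 0 := by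
  obtain ⟨k, rfl⟩ : ∃ k, p = k + 1 := ⟨p - 1, by omega⟩
  set P := matD D Q
  have hcomm0 : ∀ q, ∀ a ∈ 𝒜 0, ∀ b ∈ 𝒜 q, Commute a b := fun q a ha b hb => by
    simpa [commute_iff_eq] using hcomm 0 q a ha b hb
  have hPQ : P * Q + Q * P = P := by simpa [hidem] using (matD_mul D hQ0 Q).symm
  have hdP : matD D (Q * P ^ (2 * (k + 1))) = P ^ (2 * (k + 1) + 1) := by
    rw [matD_mul D hQ0, show 2 * (k + 1) = (2 * k + 1) + 1 by ring,
      matD_pow_succ_eq_zero D (matD_mem D hQ0) (matD_matD D Q), ← pow_succ']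
    simp [P]
  rw [trace_matD, hdP]
  exact Matrix.trace_pow_odd_eq_zero hidem hPQ (fun i j a b => hcomm0 0 _ (hQ0 i j) _ (hQ0 a b))
    (fun i j a b => hcomm0 1 _ (hQ0 i j) _ (matD_mem D hQ0 a b)) (k + 1)
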